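/- arXiv:2509.16828 — 4 statements merged into one kernel-verified Lean document; each statement's English description precedes it below -/
import Mathlib

section
/- Let θ > 0 and A : [0,∞) → ℝ be continuous with ∫₀^∞ |A(t)| dt < ∞, and set Φ(t) = exp(−θt + ∫₀^t A(s) ds). Then Φ(t)² ∫₀^t Φ(u)^{−2} du converges to 1/(2θ) as t → ∞. -/
open Real MeasureTheory intervalIntegral Filter

lemma exp_mul_intIntegral (c : ℝ) (hc : c ≠ 0) (a b : ℝ) :
    ∫ u in a..b, Real.exp (c * u) = (Real.exp (c * b) - Real.exp (c * a)) / c := by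
  have hd : ∀ x ∈ Set.uIcc a b, HasDerivAt (fun x => Real.exp (c * x) / c)
      (Real.exp (c * x)) x := by
    intro x _
    have h1 : HasDerivAt (fun x => Real.exp (c * x)) (Real.exp (c * x) * c) x := by
      have := (Real.hasDerivAt_exp (c * x)).comp x ((hasDerivAt_id x).const_mul c)
      simpa [mul_comm, Function.comp_def] using this
    have := h1.div_const c
    simpa [mul_div_assoc, mul_div_cancel_right₀ _ hc] using this
  have hint : IntervalIntegrable (fun x => Real.exp (c * x)) volume a b :=
    (Real.continuous_exp.comp (continuous_const.mul continuous_id)).intervalIntegrable a b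
  have := intervalIntegral.integral_eq_sub_of_hasDerivAt hd hint
  rw [this]
  ring

lemma aux_zero (c K : ℝ) (hc : 0 < c) (h : ℝ → ℝ) (hcont : Continuous h)
    (hK : ∀ u, 0 ≤ u → |h u| ≤ K)
    (hlim : Tendsto h atTop (nhds 0)) :
    Tendsto (fun t => Real.exp (-c * t) * ∫ u in (0:ℝ)..t, Real.exp (c * u) * h u)
      atTop (nhds 0) := by
  have hcont' : Continuous fun u => Real.exp (c * u) * h u :=
    (Real.continuous_exp.comp (continuous_const.mul continuous_id)).mul hcont
  rw [Metric.tendsto_atTop]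
  intro ε hε
  -- find T with |h u| ≤ c*ε/4 for u ≥ T
  have hsmall : ∀ᶠ u in atTop, |h u| ≤ c * ε / 4 := by
    have : ∀ᶠ u in atTop, dist (h u) 0 < c * ε / 4 :=
      (Metric.tendsto_nhds.1 hlim) _ (by positivity)
    filter_upwards [this] with u hu
    rw [Real.dist_eq, sub_zero] at hu
    exact le_of_lt hu
  obtain ⟨T₀, hT₀⟩ := eventually_atTop.1 hsmall
  set T := max T₀ 0 with hTdef
  have hT : ∀ u, T ≤ u → |h u| ≤ c * ε / 4 := fun u hu => hT₀ u (le_trans (le_max_left _ _) hu)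
  set C : ℝ := |∫ u in (0:ℝ)..T, Real.exp (c * u) * h u| with hCdef
  -- eventually exp(-c*t)*C < ε/2
  have hexp : Tendsto (fun t : ℝ => Real.exp (-c * t)) atTop (nhds 0) := by
    have : Tendsto (fun t : ℝ => -c * t) atTop atBot :=
      tendsto_id.const_mul_atTop_of_neg (neg_lt_zero.2 hc)
    exact Real.tendsto_exp_atBot.comp this
  have hev : ∀ᶠ t in atTop, Real.exp (-c * t) * C < ε / 2 := by
    have := (Metric.tendsto_nhds.1 (hexp.mul_const C)) (ε/2) (by positivity)
    filter_upwards [this] with t ht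
    rw [Real.dist_eq, zero_mul, sub_zero] at ht
    exact lt_of_le_of_lt (le_abs_self _) ht
  obtain ⟨N₀, hN₀⟩ := eventually_atTop.1 hev
  refine ⟨max N₀ T, fun t ht => ?_⟩
  have htT : T ≤ t := le_trans (le_max_right _ _) ht
  have htN : N₀ ≤ t := le_trans (le_max_left _ _) ht
  rw [Real.dist_eq, sub_zero]
  have hsplit : (∫ u in (0:ℝ)..t, Real.exp (c * u) * h u)
      = (∫ u in (0:ℝ)..T, Real.exp (c * u) * h u)
        + ∫ u in T..t, Real.exp (c * u) * h u := by
    rw [intervalIntegral.integral_add_adjacent_intervals (hcont'.intervalIntegrable _ _)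
      (hcont'.intervalIntegrable _ _)]
  have hbound2 : |∫ u in T..t, Real.exp (c * u) * h u| ≤ ε / 4 * Real.exp (c * t) := by
    have h1 : |∫ u in T..t, Real.exp (c * u) * h u|
        ≤ ∫ u in T..t, |Real.exp (c * u) * h u| :=
      intervalIntegral.abs_integral_le_integral_abs htT
    have h2 : (∫ u in T..t, |Real.exp (c * u) * h u|)
        ≤ ∫ u in T..t, Real.exp (c * u) * (c * ε / 4) := by
      refine intervalIntegral.integral_mono_on htT (hcont'.abs.intervalIntegrable _ _)
        (((Real.continuous_exp.comp (continuous_const.mul continuous_id)).mul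
          continuous_const).intervalIntegrable _ _) ?_
      intro x hx
      rw [abs_mul, abs_of_pos (Real.exp_pos _)]
      exact mul_le_mul_of_nonneg_left (hT x hx.1) (Real.exp_pos _).le
    have h3 : (∫ u in T..t, Real.exp (c * u) * (c * ε / 4))
        = c * ε / 4 * ((Real.exp (c * t) - Real.exp (c * T)) / c) := by
      rw [intervalIntegral.integral_mul_const, exp_mul_intIntegral c hc.ne' T t]
      ring
    have h4 : c * ε / 4 * ((Real.exp (c * t) - Real.exp (c * T)) / c)
        ≤ ε / 4 * Real.exp (c * t) := by
      have heq : c * ε / 4 * ((Real.exp (c * t) - Real.exp (c * T)) / c)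
          = ε / 4 * (Real.exp (c * t) - Real.exp (c * T)) := by
        field_simp
      rw [heq]
      nlinarith [Real.exp_pos (c * T)]
    linarith
  have hepos := Real.exp_pos (-c * t)
  calc |Real.exp (-c * t) * ∫ u in (0:ℝ)..t, Real.exp (c * u) * h u|
      = Real.exp (-c * t) * |∫ u in (0:ℝ)..t, Real.exp (c * u) * h u| := by
        rw [abs_mul, abs_of_pos hepos]
    _ ≤ Real.exp (-c * t) * (C + |∫ u in T..t, Real.exp (c * u) * h u|) := by
        rw [hsplit]
        exact mul_le_mul_of_nonneg_left (abs_add_le _ _) hepos.le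
    _ ≤ Real.exp (-c * t) * C + Real.exp (-c * t) * (ε / 4 * Real.exp (c * t)) := by
        rw [mul_add]
        exact add_le_add_right (mul_le_mul_of_nonneg_left hbound2 hepos.le) _
    _ = Real.exp (-c * t) * C + ε / 4 := by
        rw [mul_comm (ε/4), ← mul_assoc, ← Real.exp_add]
        simp
    _ < ε / 2 + ε / 4 := by linarith [hN₀ t htN]
    _ < ε := by linarith

lemma aux_main (c K L : ℝ) (hc : 0 < c) (p : ℝ → ℝ) (hcont : Continuous p)
    (hK : ∀ u, 0 ≤ u → |p u| ≤ K)
    (hlim : Tendsto p atTop (nhds L)) :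
    Tendsto (fun t => Real.exp (-c * t) * ∫ u in (0:ℝ)..t, Real.exp (c * u) * p u)
      atTop (nhds (L / c)) := by
  have hexpc : Continuous fun u : ℝ => Real.exp (c * u) :=
    Real.continuous_exp.comp (continuous_const.mul continuous_id)
  set h : ℝ → ℝ := fun u => p u - L with hhdef
  have hzero := aux_zero c (K + |L|) hc h (hcont.sub continuous_const)
    (fun u hu => by
      calc |p u - L| ≤ |p u| + |L| := abs_sub _ _
      _ ≤ K + |L| := add_le_add_left (hK u hu) _)
    (by simpa using hlim.sub_const L)
  have hLpart : Tendsto (fun t => Real.exp (-c * t) * ∫ u in (0:ℝ)..t, Real.exp (c * u) * L)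
      atTop (nhds (L / c)) := by
    have heq : ∀ t, Real.exp (-c * t) * ∫ u in (0:ℝ)..t, Real.exp (c * u) * L
        = L / c - Real.exp (-c * t) * (L / c) := by
      intro t
      rw [intervalIntegral.integral_mul_const, exp_mul_intIntegral c hc.ne']
      rw [show c * (0:ℝ) = 0 by ring, Real.exp_zero]
      have h1 : Real.exp (-(c * t)) * Real.exp (c * t) = 1 := by
        rw [← Real.exp_add]; simp
      simp only [neg_mul]
      linear_combination (L / c) * h1
    simp_rw [heq]
    have hexp : Tendsto (fun t : ℝ => Real.exp (-c * t)) atTop (nhds 0) := by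
      have : Tendsto (fun t : ℝ => -c * t) atTop atBot :=
        tendsto_id.const_mul_atTop_of_neg (neg_lt_zero.2 hc)
      exact Real.tendsto_exp_atBot.comp this
    have := (tendsto_const_nhds (x := L / c) (f := atTop)).sub (hexp.mul_const (L / c))
    simpa using this
  have hcomb := hLpart.add hzero
  simp only [add_zero] at hcomb
  refine hcomb.congr fun t => ?_
  rw [← mul_add, ← intervalIntegral.integral_add (f := fun u => Real.exp (c * u) * L)
    (g := fun u => Real.exp (c * u) * h u)
    ((hexpc.mul continuous_const).intervalIntegrable _ _)
    ((hexpc.mul (hcont.sub continuous_const)).intervalIntegrable _ _)]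
  congr 1
  apply intervalIntegral.integral_congr
  intro x _
  simp [hhdef]
  ring

/-- For θ > 0 and A : [0,∞) → ℝ continuous with ∫₀^∞ |A| < ∞,
with Φ(t) = exp(−θt + ∫₀^t A(s) ds), the quantity Φ(t)² ∫₀^t Φ(u)^{−2} du
tends to 1/(2θ) as t → ∞. -/
theorem stmt_3 (θ : ℝ) (hθ : 0 < θ) (A : ℝ → ℝ)
    (hAcont : ContinuousOn A (Set.Ici 0))
    (hAint : IntegrableOn (fun t => |A t|) (Set.Ici 0) volume)
    (Φ : ℝ → ℝ)
    (hΦ : ∀ t, Φ t = Real.exp (-θ * t + ∫ s in (0:ℝ)..t, A s)) :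
    Tendsto (fun t => Φ t ^ 2 * ∫ u in (0:ℝ)..t, (Φ u ^ 2)⁻¹)
      atTop (nhds (1 / (2 * θ))) := by
  set c := 2 * θ with hcdef
  have hc : 0 < c := by positivity
  set A' : ℝ → ℝ := fun u => A (max u 0) with hAtdef
  have hA'cont : Continuous A' :=
    hAcont.comp_continuous (continuous_id.max continuous_const) (fun x => Set.mem_Ici.2 (le_max_right _ _))
  have hA'eq : ∀ u, 0 ≤ u → A' u = A u := fun u hu => by
    simp only [hAtdef, max_eq_left hu]
  set B : ℝ → ℝ := fun t => ∫ s in (0:ℝ)..t, A' s with hBdef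
  have hBcont : Continuous B :=
    intervalIntegral.continuous_primitive (fun a b => hA'cont.intervalIntegrable a b) 0
  have hBeq : ∀ t, 0 ≤ t → B t = ∫ s in (0:ℝ)..t, A s := by
    intro t ht
    apply intervalIntegral.integral_congr
    intro x hx
    rw [Set.uIcc_of_le ht] at hx
    exact hA'eq x hx.1
  have hAmeas : AEStronglyMeasurable A (volume.restrict (Set.Ici (0:ℝ))) :=
    hAcont.aestronglyMeasurable measurableSet_Ici
  have hAint' : IntegrableOn A (Set.Ici (0:ℝ)) volume :=
    hAint.mono' hAmeas (ae_of_all _ fun x => le_of_eq (Real.norm_eq_abs _))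
  have hA'int : IntegrableOn A' (Set.Ioi (0:ℝ)) volume :=
    ((hAint'.mono_set Set.Ioi_subset_Ici_self).congr_fun
      (fun x hx => (hA'eq x (le_of_lt hx)).symm) measurableSet_Ioi)
  set Cv : ℝ := ∫ x in Set.Ioi (0:ℝ), A' x with hCvdef
  have hBtend : Tendsto B atTop (nhds Cv) :=
    MeasureTheory.intervalIntegral_tendsto_integral_Ioi 0 hA'int tendsto_id
  -- bound on |B t|
  set M : ℝ := ∫ x in Set.Ioi (0:ℝ), |A' x| with hMdef
  have hA'abs : IntegrableOn (fun x => |A' x|) (Set.Ioi (0:ℝ)) volume := hA'int.abs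
  have hBbound : ∀ t, 0 ≤ t → |B t| ≤ M := by
    intro t ht
    have h1 : |B t| ≤ ∫ s in (0:ℝ)..t, |A' s| :=
      intervalIntegral.abs_integral_le_integral_abs ht
    have h2 : (∫ s in (0:ℝ)..t, |A' s|) = ∫ s in Set.Ioc 0 t, |A' s| :=
      intervalIntegral.integral_of_le ht
    have h3 : (∫ s in Set.Ioc (0:ℝ) t, |A' s|) ≤ M := by
      apply MeasureTheory.setIntegral_mono_set hA'abs
        (ae_of_all _ fun x => abs_nonneg _)
      exact HasSubset.Subset.eventuallyLE Set.Ioc_subset_Ioi_self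
    linarith
  -- the function p
  set p : ℝ → ℝ := fun u => Real.exp (-(2 * B u)) with hpdef
  have hpcont : Continuous p := Real.continuous_exp.comp (continuous_const.mul hBcont).neg
  have hplim : Tendsto p atTop (nhds (Real.exp (-(2 * Cv)))) := by
    have : Tendsto (fun t => -(2 * B t)) atTop (nhds (-(2 * Cv))) :=
      (hBtend.const_mul 2).neg
    exact (Real.continuous_exp.continuousAt.tendsto).comp this
  have hpK : ∀ u, 0 ≤ u → |p u| ≤ Real.exp (2 * M) := by
    intro u hu
    rw [hpdef, abs_of_pos (Real.exp_pos _)]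
    apply Real.exp_le_exp.2
    have := hBbound u hu
    have := neg_abs_le (B u)
    nlinarith
  have hmain := aux_main c (Real.exp (2 * M)) (Real.exp (-(2 * Cv))) hc p hpcont hpK hplim
  have hexp2B : Tendsto (fun t => Real.exp (2 * B t)) atTop (nhds (Real.exp (2 * Cv))) :=
    (Real.continuous_exp.continuousAt.tendsto).comp (hBtend.const_mul 2)
  have hmul := hexp2B.mul hmain
  have hval : Real.exp (2 * Cv) * (Real.exp (-(2 * Cv)) / c) = 1 / (2 * θ) := by
    rw [hcdef, Real.exp_neg]
    field_simp
  rw [hval] at hmul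
  -- eventual equality
  have hev : (fun t => Real.exp (2 * B t)
        * (Real.exp (-c * t) * ∫ u in (0:ℝ)..t, Real.exp (c * u) * p u))
      =ᶠ[atTop] (fun t => Φ t ^ 2 * ∫ u in (0:ℝ)..t, (Φ u ^ 2)⁻¹) := by
    filter_upwards [eventually_ge_atTop (0:ℝ)] with t ht
    have hΦsq : ∀ u, 0 ≤ u → (Φ u ^ 2)⁻¹ = Real.exp (c * u) * p u := by
      intro u hu
      rw [hΦ u, ← hBeq u hu, sq, ← Real.exp_add, ← Real.exp_neg, hpdef, ← Real.exp_add]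
      congr 1
      rw [hcdef]; ring
    have hint : (∫ u in (0:ℝ)..t, (Φ u ^ 2)⁻¹)
        = ∫ u in (0:ℝ)..t, Real.exp (c * u) * p u := by
      apply intervalIntegral.integral_congr
      intro x hx
      rw [Set.uIcc_of_le ht] at hx
      exact hΦsq x hx.1
    have hΦt : Φ t ^ 2 = Real.exp (2 * B t) * Real.exp (-c * t) := by
      rw [hΦ t, ← hBeq t ht, sq, ← Real.exp_add, ← Real.exp_add]
      congr 1
      rw [hcdef]; ring
    rw [hint, hΦt]
    ring
  exact hmul.congr' hev
end

section
/- With θ, σ, σ₀, α > 0 and t_ε = |ln ε|/θ, the quantity D(ε, t) := (1/2) ln(1 + σ₀²/(ε²σ² α⁻² e^{2θt}/(2θ))) evaluated at t = c·t_ε satisfies: for 0 < c < 1, D(ε, c t_ε) → +∞ as ε → 0, and for c > 1, D(ε, c t_ε) → 0 as ε → 0. -/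
open Real Filter

lemma rpow_tendsto_atTop_of_neg {p : ℝ} (hp : p < 0) :
    Tendsto (fun ε : ℝ => ε ^ p) (nhdsWithin 0 (Set.Ioi 0)) atTop := by
  have h := (tendsto_rpow_atTop (y := -p) (by linarith)).comp tendsto_inv_nhdsGT_zero
  refine h.congr' ?_
  filter_upwards [self_mem_nhdsWithin] with ε (hε : 0 < ε)
  simp [Real.rpow_neg_one, ← Real.rpow_natCast, ← Real.rpow_mul hε.le,
    Real.inv_rpow hε.le, ← Real.rpow_neg hε.le]

lemma rpow_tendsto_zero_of_pos {p : ℝ} (hp : 0 < p) :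
    Tendsto (fun ε : ℝ => ε ^ p) (nhdsWithin 0 (Set.Ioi 0)) (nhds 0) := by
  have h := (tendsto_rpow_neg_atTop (y := p) hp).comp tendsto_inv_nhdsGT_zero
  refine h.congr' ?_
  filter_upwards [self_mem_nhdsWithin] with ε (hε : 0 < ε)
  simp only [Function.comp]
  rw [← Real.rpow_neg_one ε, ← Real.rpow_mul hε.le]
  ring_nf

/-- abrupt decorrelation for the 1D OU-type process. With
t_ε = |ln ε|/θ and D(ε,t) = (1/2) ln(1 + σ₀²/(ε²σ²α⁻²e^{2θt}/(2θ))),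
D(ε, c t_ε) → +∞ as ε → 0⁺ when 0 < c < 1, and → 0 when c > 1. -/
theorem stmt_6 (θ σ σ₀ α : ℝ) (hθ : 0 < θ) (hσ : 0 < σ) (hσ₀ : 0 < σ₀)
    (hα : 0 < α)
    (tc : ℝ → ℝ) (htc : ∀ ε, tc ε = |Real.log ε| / θ)
    (D : ℝ → ℝ → ℝ)
    (hD : ∀ ε t, D ε t =
      (1 / 2) * Real.log (1 + σ₀ ^ 2 /
        (ε ^ 2 * σ ^ 2 * α⁻¹ ^ 2 * Real.exp (2 * θ * t) / (2 * θ))))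
    (c : ℝ) :
    (0 < c → c < 1 →
        Tendsto (fun ε => D ε (c * tc ε)) (nhdsWithin 0 (Set.Ioi 0)) atTop) ∧
    (1 < c →
        Tendsto (fun ε => D ε (c * tc ε)) (nhdsWithin 0 (Set.Ioi 0)) (nhds 0)) := by
  set K : ℝ := σ₀ ^ 2 * (2 * θ) * α ^ 2 / σ ^ 2 with hK
  have hKpos : 0 < K := by positivity
  have key : ∀ᶠ ε in nhdsWithin (0:ℝ) (Set.Ioi 0),
      D ε (c * tc ε) = (1 / 2) * Real.log (1 + K * ε ^ (2 * c - 2 : ℝ)) := by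
    have h1 : Set.Ioo (0:ℝ) 1 ∈ nhdsWithin (0:ℝ) (Set.Ioi 0) :=
      Ioo_mem_nhdsGT_of_mem (by norm_num : (0:ℝ) ∈ Set.Ico (0:ℝ) 1)
    filter_upwards [h1] with ε hε
    obtain ⟨hε0, hε1⟩ := hε
    rw [hD, htc]
    have hlog : |Real.log ε| = -Real.log ε := abs_of_neg (Real.log_neg hε0 hε1)
    have hexp : Real.exp (2 * θ * (c * (|Real.log ε| / θ))) = ε ^ (-(2 * c) : ℝ) := by
      rw [hlog, Real.rpow_def_of_pos hε0]
      congr 1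
      field_simp
    rw [hexp]
    have hsq : ε ^ 2 * (ε ^ (-(2 * c) : ℝ)) = ε ^ (2 - 2 * c : ℝ) := by
      rw [← Real.rpow_natCast ε 2, ← Real.rpow_add hε0]
      norm_num [sub_eq_add_neg]
    have hApos : (0:ℝ) < ε ^ (2 - 2 * c : ℝ) := Real.rpow_pos_of_pos hε0 _
    have hinv : ε ^ (2 * c - 2 : ℝ) = (ε ^ (2 - 2 * c : ℝ))⁻¹ := by
      rw [← Real.rpow_neg hε0.le]
      norm_num
    congr 1
    congr 1
    rw [hinv, hK]
    have h2 : ε ^ 2 * σ ^ 2 * α⁻¹ ^ 2 * ε ^ (-(2 * c) : ℝ)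
        = ε ^ (2 - 2 * c : ℝ) * σ ^ 2 * α⁻¹ ^ 2 := by
      rw [← hsq]; ring
    rw [h2]
    field_simp
  constructor
  · intro hc0 hc1
    have hrp : Tendsto (fun ε : ℝ => ε ^ (2 * c - 2 : ℝ))
        (nhdsWithin 0 (Set.Ioi 0)) atTop :=
      rpow_tendsto_atTop_of_neg (by linarith)
    have h2 : Tendsto (fun ε : ℝ => 1 + K * ε ^ (2 * c - 2 : ℝ))
        (nhdsWithin 0 (Set.Ioi 0)) atTop :=
      tendsto_atTop_add_const_left _ 1 (hrp.const_mul_atTop hKpos)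
    have h3 := Real.tendsto_log_atTop.comp h2
    have h4 : Tendsto (fun ε : ℝ => (1/2) * Real.log (1 + K * ε ^ (2 * c - 2 : ℝ)))
        (nhdsWithin 0 (Set.Ioi 0)) atTop :=
      h3.const_mul_atTop (by norm_num)
    exact h4.congr' (key.mono fun _ h => h.symm)
  · intro hc
    have hrp : Tendsto (fun ε : ℝ => ε ^ (2 * c - 2 : ℝ))
        (nhdsWithin 0 (Set.Ioi 0)) (nhds 0) :=
      rpow_tendsto_zero_of_pos (by linarith)
    have h2 : Tendsto (fun ε : ℝ => 1 + K * ε ^ (2 * c - 2 : ℝ))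
        (nhdsWithin 0 (Set.Ioi 0)) (nhds 1) := by
      have := (hrp.const_mul K).const_add 1
      simpa using this
    have h3 : Tendsto (fun ε : ℝ => (1/2) * Real.log (1 + K * ε ^ (2 * c - 2 : ℝ)))
        (nhdsWithin 0 (Set.Ioi 0)) (nhds 0) := by
      have hcont := (Real.continuousAt_log (by norm_num : (1:ℝ) ≠ 0)).tendsto
      have h4 := hcont.comp h2
      rw [Real.log_one] at h4
      simpa using h4.const_mul (1/2 : ℝ)
    exact h3.congr' (key.mono fun _ h => h.symm)
end

section
/- Let Q ∈ ℝ^{d×d} be Hurwitz stable with spectral abscissa ϑ = max Re(eigenvalues) < 0, let m be the maximal size of Jordan blocks attaining ϑ, and suppose every eigenvalue with real part ϑ and block size m is real (equal to ϑ). With t_ε = (1/|ϑ|)(ln(1/ε) + (m−1) ln ln(1/ε)) and ω_ε → w/|ϑ| for some w > 0, for each r ∈ ℝ the matrix ε^{−1} e^{(t_ε + r ω_ε) Q} converges as ε → 0 to e^{−rw} Γ, where Γ = (|ϑ|^{1−m}/(m−1)!) P₁ I^ℓ_m P₁^{−1}, with P₁ a Jordan change-of-basis (blocks of eigenvalue ϑ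 and size m first) and I^ℓ_m the block diagonal matrix whose first ℓ blocks are the m×m matrix E_{1m} (1 in the (1,m)-entry) and whose remaining blocks are zero. -/
open Matrix Filter Real

/-- The m×m (upper) Jordan block with eigenvalue `lam`. -/
def jordanBlock (lam : ℂ) (n : ℕ) : Matrix (Fin n) (Fin n) ℂ :=
  Matrix.of fun i j => if j = i then lam else if (j : ℕ) = (i : ℕ) + 1 then 1 else 0

def nilp (n : ℕ) : Matrix (Fin n) (Fin n) ℂ :=
  Matrix.of fun i j => if (j : ℕ) = (i : ℕ) + 1 then 1 else 0

lemma nilp_pow (n q : ℕ) :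
    (nilp n) ^ q = Matrix.of fun a b : Fin n => if (b : ℕ) = (a : ℕ) + q then 1 else 0 := by
  induction q with
  | zero =>
    ext a b
    simp [Matrix.one_apply, Fin.ext_iff, eq_comm]
  | succ q ih =>
    ext a b
    rw [pow_succ, ih]
    simp only [Matrix.mul_apply, Matrix.of_apply, nilp]
    have hterm : ∀ c : Fin n,
        (if (c : ℕ) = (a : ℕ) + q then (1 : ℂ) else 0) *
          (if (b : ℕ) = (c : ℕ) + 1 then 1 else 0) =
        if (c : ℕ) = (a : ℕ) + q ∧ (b : ℕ) = (c : ℕ) + 1 then 1 else 0 := by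
      intro c; split_ifs <;> simp_all
    rw [Finset.sum_congr rfl fun c _ => hterm c]
    by_cases h : (a : ℕ) + q < n
    · rw [Finset.sum_eq_single (⟨(a : ℕ) + q, h⟩ : Fin n)]
      · simp [Nat.add_assoc]
      · intro c _ hc
        rw [if_neg]
        rintro ⟨h1, -⟩
        exact hc (Fin.ext h1)
      · intro hmem; exact absurd (Finset.mem_univ _) hmem
    · rw [Finset.sum_eq_zero, if_neg]
      · intro hb; omega
      · intro c _
        rw [if_neg]
        rintro ⟨h1, -⟩
        omega
lemma nilp_pow_eq_zero {n q : ℕ} (h : n ≤ q) : (nilp n) ^ q = 0 := by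
  rw [nilp_pow]
  ext a b
  simp only [Matrix.of_apply, Matrix.zero_apply]
  rw [if_neg]
  omega

lemma jordan_split (μ : ℂ) (n : ℕ) : jordanBlock μ n = μ • (1 : Matrix (Fin n) (Fin n) ℂ) + nilp n := by
  ext i j
  by_cases h : j = i
  · subst h
    simp [jordanBlock, nilp, Matrix.one_apply]
  · simp [jordanBlock, nilp, Matrix.one_apply, h, Ne.symm h]

lemma exp_jordan (μ : ℂ) (n : ℕ) (t : ℂ) (a b : Fin n) :
    NormedSpace.exp (t • jordanBlock μ n) a b =
      Complex.exp (t * μ) *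
        (if (a : ℕ) ≤ (b : ℕ) then
            t ^ ((b : ℕ) - (a : ℕ)) / (((b : ℕ) - (a : ℕ)).factorial : ℂ)
          else 0) := by
  letI : SeminormedRing (Matrix (Fin n) (Fin n) ℂ) := Matrix.linftyOpSemiNormedRing
  letI : NormedRing (Matrix (Fin n) (Fin n) ℂ) := Matrix.linftyOpNormedRing
  letI : NormedAlgebra ℝ (Matrix (Fin n) (Fin n) ℂ) := Matrix.linftyOpNormedAlgebra
  letI : NormedAlgebra ℂ (Matrix (Fin n) (Fin n) ℂ) := Matrix.linftyOpNormedAlgebra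
  letI : NormedAlgebra ℚ (Matrix (Fin n) (Fin n) ℂ) := Matrix.linftyOpNormedAlgebra
  have hsplit : t • jordanBlock μ n
      = (t * μ) • (1 : Matrix (Fin n) (Fin n) ℂ) + t • nilp n := by
    rw [jordan_split, smul_add, smul_smul]
  have hcomm : Commute ((t * μ) • (1 : Matrix (Fin n) (Fin n) ℂ)) (t • nilp n) :=
    ((Commute.one_left (nilp n)).smul_left (t * μ)).smul_right t
  rw [hsplit, Matrix.exp_add_of_commute _ _ hcomm]
  have h1 : NormedSpace.exp ((t * μ) • (1 : Matrix (Fin n) (Fin n) ℂ))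
      = Complex.exp (t * μ) • (1 : Matrix (Fin n) (Fin n) ℂ) := by
    rw [← Algebra.algebraMap_eq_smul_one]
    erw [← NormedSpace.map_exp (algebraMap ℂ (Matrix (Fin n) (Fin n) ℂ)) (continuous_algebraMap _ _)]
    rw [← Complex.exp_eq_exp_ℂ, Algebra.algebraMap_eq_smul_one]
  have h2 : NormedSpace.exp (t • nilp n)
      = ∑ q ∈ Finset.range n, ((q.factorial : ℝ))⁻¹ • (t • nilp n) ^ q := by
    rw [NormedSpace.exp_eq_tsum (𝕂 := ℝ)]
    refine tsum_eq_sum ?_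
    intro q hq
    rw [smul_pow, nilp_pow_eq_zero (by simpa using hq), smul_zero, smul_zero]
  erw [h1, h2]
  rw [smul_mul_assoc, one_mul, Matrix.smul_apply, smul_eq_mul]
  congr 1
  rw [Matrix.sum_apply]
  have hterm : ∀ q : ℕ,
      (((q.factorial : ℝ))⁻¹ • (t • nilp n) ^ q) a b
        = if (b : ℕ) = (a : ℕ) + q then
            t ^ q / ((q.factorial : ℝ) : ℂ) else 0 := by
    intro q
    rw [smul_pow, nilp_pow]
    simp only [Matrix.smul_apply, Matrix.of_apply]
    split_ifs with h
    · rw [smul_eq_mul, mul_one, Complex.real_smul, Complex.ofReal_inv]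
      ring
    · simp
  rw [Finset.sum_congr rfl fun q _ => hterm q]
  by_cases hab : (a : ℕ) ≤ (b : ℕ)
  · rw [if_pos hab,
      Finset.sum_eq_single ((b : ℕ) - (a : ℕ))]
    · rw [if_pos (by omega)]
      norm_cast
    · intro q _ hq
      rw [if_neg (by omega)]
    · intro hmem
      exact absurd (Finset.mem_range.2 (lt_of_le_of_lt (Nat.sub_le _ _) b.isLt)) hmem
  · rw [if_neg hab, Finset.sum_eq_zero]
    intro q _
    rw [if_neg (by omega)]

lemma real_smul_matrix {ι : Type*} (c : ℝ) (M : Matrix ι ι ℂ) :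
    c • M = (c : ℂ) • M := by
  ext i j
  simp [Complex.real_smul]

lemma map_smul_complex {ι : Type*} (c : ℝ) (Q : Matrix ι ι ℝ) :
    (c • Q).map (algebraMap ℝ ℂ) = c • (Q.map (algebraMap ℝ ℂ)) := by
  ext i j
  simp [Complex.real_smul]

lemma exp_map_complex {ι : Type*} [Fintype ι] [DecidableEq ι] (A : Matrix ι ι ℝ) :
    (NormedSpace.exp A).map (algebraMap ℝ ℂ)
      = NormedSpace.exp (A.map (algebraMap ℝ ℂ)) := by
  letI : SeminormedRing (Matrix ι ι ℝ) := Matrix.linftyOpSemiNormedRing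
  letI : NormedRing (Matrix ι ι ℝ) := Matrix.linftyOpNormedRing
  letI : NormedAlgebra ℝ (Matrix ι ι ℝ) := Matrix.linftyOpNormedAlgebra
  letI : NormedAlgebra ℚ (Matrix ι ι ℝ) := Matrix.linftyOpNormedAlgebra
  letI : SeminormedRing (Matrix ι ι ℂ) := Matrix.linftyOpSemiNormedRing
  letI : NormedRing (Matrix ι ι ℂ) := Matrix.linftyOpNormedRing
  letI : NormedAlgebra ℝ (Matrix ι ι ℂ) := Matrix.linftyOpNormedAlgebra
  letI : NormedAlgebra ℚ (Matrix ι ι ℂ) := Matrix.linftyOpNormedAlgebra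
  have := NormedSpace.map_exp ((algebraMap ℝ ℂ).mapMatrix
      : Matrix ι ι ℝ →+* Matrix ι ι ℂ)
    (Continuous.matrix_map continuous_id (continuous_algebraMap ℝ ℂ)) A
  simp only [RingHom.mapMatrix_apply] at this
  exact this

lemma tendsto_pow_mul_exp_neg (j : ℕ) (δ : ℝ) (hδ : δ < 0) :
    Tendsto (fun x : ℝ => x ^ j * Real.exp (δ * x)) atTop (nhds 0) := by
  have h1 := tendsto_pow_mul_exp_neg_atTop_nhds_zero j
  have h2 : Tendsto (fun x : ℝ => (-δ) * x) atTop atTop :=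
    tendsto_id.const_mul_atTop (by linarith)
  have h3 := (h1.comp h2).const_mul (((-δ) ^ j)⁻¹)
  rw [mul_zero] at h3
  refine h3.congr fun x => ?_
  have hδ' : (-δ) ^ j ≠ 0 := pow_ne_zero _ (by linarith)
  simp only [Function.comp, mul_pow, neg_neg, mul_neg]
  field_simp

/-- let Q be a real Hurwitz-stable matrix whose complexification
has Jordan decomposition Q = P J P⁻¹, J = blockdiag(jordanBlock (λᵢ, kᵢ)),
with spectral abscissa ϑ = max Re λᵢ < 0 and m the maximal size of the blocks
attaining ϑ, and assume every eigenvalue with Re = ϑ carried by a block of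
maximal size m is real (= ϑ).  With t_ε = (1/|ϑ|)(ln(1/ε) + (m−1)ln ln(1/ε))
and window sizes ω_ε → w/|ϑ| (w > 0), for each r ∈ ℝ the matrix
ε⁻¹ e^{(t_ε + rω_ε)Q} converges, as ε → 0⁺, to e^{−rw} Γ, where
Γ = (|ϑ|^{1−m}/(m−1)!) P N P⁻¹ and N is the block diagonal matrix which, on
each Jordan block of eigenvalue ϑ and maximal size m, is the m×m matrix
E_{1m} (single 1 in the top-right corner) and is zero elsewhere. -/
theorem stmt_11 (p : ℕ) (k : Fin p → ℕ) (hk : ∀ i, 1 ≤ k i)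
    (lam : Fin p → ℂ)
    (Q : Matrix ((i : Fin p) × Fin (k i)) ((i : Fin p) × Fin (k i)) ℝ)
    (P : Matrix ((i : Fin p) × Fin (k i)) ((i : Fin p) × Fin (k i)) ℂ)
    (hP : IsUnit P.det)
    (hQ : Q.map (algebraMap ℝ ℂ) =
      P * Matrix.blockDiagonal' (fun i => jordanBlock (lam i) (k i)) * P⁻¹)
    (ϑ : ℝ) (hϑ : ϑ < 0)
    (hmax : ∀ i, (lam i).re ≤ ϑ) (hattain : ∃ i, (lam i).re = ϑ)
    (m : ℕ)
    (hm1 : ∀ i, (lam i).re = ϑ → k i ≤ m)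
    (hm2 : ∃ i, (lam i).re = ϑ ∧ k i = m)
    (hreal : ∀ i, (lam i).re = ϑ → k i = m → lam i = (ϑ : ℂ))
    (w : ℝ) (hw : 0 < w)
    (tc : ℝ → ℝ)
    (htc : ∀ ε, tc ε = (1 / |ϑ|) *
      (Real.log (1 / ε) + (m - 1 : ℝ) * Real.log (Real.log (1 / ε))))
    (ωε : ℝ → ℝ)
    (hωε : Tendsto ωε (nhdsWithin 0 (Set.Ioi 0)) (nhds (w / |ϑ|)))
    (N : Matrix ((i : Fin p) × Fin (k i)) ((i : Fin p) × Fin (k i)) ℂ)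
    (hN : N = Matrix.blockDiagonal' (fun i => Matrix.of fun a b : Fin (k i) =>
      if (lam i).re = ϑ ∧ k i = m ∧ (a : ℕ) = 0 ∧ (b : ℕ) = m - 1
        then 1 else 0))
    (Γ : Matrix ((i : Fin p) × Fin (k i)) ((i : Fin p) × Fin (k i)) ℂ)
    (hΓ : Γ = ((|ϑ| ^ ((1 : ℝ) - (m : ℝ)) / (Nat.factorial (m - 1) : ℝ)) : ℝ) •
      (P * N * P⁻¹)) :
    ∀ r : ℝ,
      Tendsto (fun ε : ℝ => ε⁻¹ •
          ((NormedSpace.exp ((tc ε + r * ωε ε) • Q)).map (algebraMap ℝ ℂ)))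
        (nhdsWithin 0 (Set.Ioi 0))
        (nhds (Real.exp (-(r * w)) • Γ)) := by
  intro r
  have hϑne : ϑ ≠ 0 := ne_of_lt hϑ
  have hϑa : |ϑ| = -ϑ := abs_of_neg hϑ
  have hϑpos : (0:ℝ) < |ϑ| := abs_pos.mpr hϑne
  obtain ⟨i0, hi0re, hi0k⟩ := hm2
  have hm' : 1 ≤ m := hi0k ▸ hk i0
  set l : Filter ℝ := nhdsWithin 0 (Set.Ioi 0) with hldef
  set s : ℝ → ℝ := fun ε => tc ε + r * ωε ε with hsdef
  set C : ℝ := Real.exp (-(r*w)) * (|ϑ| ^ ((1:ℝ) - (m:ℝ)) / ((m-1).factorial : ℝ)) with hCdef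
  -- basic filter facts
  have hIoo : ∀ᶠ ε in l, ε ∈ Set.Ioo (0:ℝ) 1 :=
    Ioo_mem_nhdsGT_of_mem (by constructor <;> norm_num)
  have hL_top : Tendsto (fun ε : ℝ => Real.log (1/ε)) l atTop := by
    have h1 : Tendsto (fun ε : ℝ => Real.log ε) l atBot :=
      Real.tendsto_log_nhdsGT_zero
    have := tendsto_neg_atBot_atTop.comp h1
    refine this.congr fun ε => ?_
    simp [Function.comp, one_div, Real.log_inv]
  have hL1 : ∀ᶠ ε in l, 1 ≤ Real.log (1/ε) := hL_top.eventually (eventually_ge_atTop 1)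
  have hlogdiv : Tendsto (fun x : ℝ => Real.log x / x) atTop (nhds 0) := by
    have := Real.tendsto_pow_log_div_mul_add_atTop 1 0 1 one_ne_zero
    simpa using this
  -- s / L → |ϑ|⁻¹
  have hsL : Tendsto (fun ε => s ε / Real.log (1/ε)) l (nhds (|ϑ|⁻¹)) := by
    have h1 : Tendsto (fun ε => (1/|ϑ|) * (1 + ((m:ℝ)-1) * (Real.log (Real.log (1/ε)) / Real.log (1/ε)))
        + (r * ωε ε) * (Real.log (1/ε))⁻¹) l
        (nhds ((1/|ϑ|) * (1 + ((m:ℝ)-1) * 0) + (r * (w/|ϑ|)) * 0)) := by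
      exact Tendsto.add
        (tendsto_const_nhds.mul (tendsto_const_nhds.add
          (Tendsto.const_mul _ (hlogdiv.comp hL_top))))
        ((hωε.const_mul r).mul (tendsto_inv_atTop_zero.comp hL_top))
    have h2 : (fun ε => (1/|ϑ|) * (1 + ((m:ℝ)-1) * (Real.log (Real.log (1/ε)) / Real.log (1/ε)))
        + (r * ωε ε) * (Real.log (1/ε))⁻¹) =ᶠ[l] (fun ε => s ε / Real.log (1/ε)) := by
      filter_upwards [hL1] with ε hLε
      have hLne : Real.log (1/ε) ≠ 0 := by linarith
      simp only [hsdef, htc ε]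
      field_simp
    have h3 := h1.congr' h2
    convert h3 using 2
    norm_num
  have hs_top : Tendsto s l atTop := by
    have h4 : Tendsto (fun ε => (s ε / Real.log (1/ε)) * Real.log (1/ε)) l atTop :=
      Tendsto.pos_mul_atTop (by positivity) hsL hL_top
    refine h4.congr' ?_
    filter_upwards [hL1] with ε hLε
    have hLne : Real.log (1/ε) ≠ 0 := by linarith
    field_simp
  have hs_pos : ∀ᶠ ε in l, 0 < s ε := hs_top.eventually (eventually_gt_atTop 0)
  have hrω : Tendsto (fun ε => Real.exp (ϑ * (r * ωε ε))) l (nhds (Real.exp (-(r*w)))) := by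
    have h1 : Tendsto (fun ε => ϑ * (r * ωε ε)) l (nhds (ϑ * (r * (w/|ϑ|)))) :=
      ((hωε.const_mul r).const_mul ϑ)
    have h2 : ϑ * (r * (w/|ϑ|)) = -(r*w) := by
      rw [hϑa]
      rw [show ϑ * (r * (w / -ϑ)) = -(r * w * (ϑ/ϑ)) by ring]
      rw [div_self hϑne, mul_one]
    rw [h2] at h1
    exact (Real.continuous_exp.tendsto _).comp h1
  -- the key pointwise identity
  have hKey : ∀ᶠ ε in l, ε⁻¹ * Real.exp (ϑ * s ε)
      = Real.exp (ϑ * (r * ωε ε)) * ((Real.log (1/ε))^(m-1))⁻¹ := by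
    filter_upwards [hIoo] with ε hε
    obtain ⟨hε0, hε1⟩ := hε
    have hLpos : 0 < Real.log (1/ε) := Real.log_pos (by rw [lt_div_iff₀ hε0]; linarith)
    have hts : ϑ * s ε = -(Real.log (1/ε)) + (-(((m:ℝ)-1) * Real.log (Real.log (1/ε))) + ϑ * (r * ωε ε)) := by
      have hϑinv : ϑ * (1/|ϑ|) = -1 := by rw [hϑa]; field_simp
      simp only [hsdef]
      rw [mul_add, htc ε, ← mul_assoc, hϑinv]
      ring
    rw [hts, Real.exp_add, Real.exp_add]
    have e1 : Real.exp (-(Real.log (1/ε))) = ε := by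
      rw [Real.exp_neg, Real.exp_log (by positivity)]
      simp
    have e2 : Real.exp (-(((m:ℝ)-1) * Real.log (Real.log (1/ε))))
        = ((Real.log (1/ε))^(m-1))⁻¹ := by
      have hc : ((m:ℝ)-1) = ((m-1 : ℕ) : ℝ) := by
        rw [Nat.cast_sub hm']; norm_num
      rw [hc, Real.exp_neg, Real.exp_nat_mul, Real.exp_log hLpos]
    rw [e1, e2]
    field_simp [ne_of_gt hε0]
  have hLpowinv : ∃ c0 : ℝ, Tendsto (fun ε => ((Real.log (1/ε))^(m-1))⁻¹) l (nhds c0) := by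
    rcases Nat.eq_zero_or_pos (m-1) with h | h
    · exact ⟨1, by simp only [h, pow_zero, inv_one]; exact tendsto_const_nhds⟩
    · refine ⟨0, tendsto_inv_atTop_zero.comp (Tendsto.comp (tendsto_pow_atTop (by omega)) hL_top)⟩
  obtain ⟨c0, hc0⟩ := hLpowinv
  -- matrix identity
  have hident : ∀ ε : ℝ,
      ε⁻¹ • ((NormedSpace.exp ((tc ε + r * ωε ε) • Q)).map (algebraMap ℝ ℂ))
        = P * (ε⁻¹ • Matrix.blockDiagonal'
            (fun i => NormedSpace.exp (s ε • jordanBlock (lam i) (k i)))) * P⁻¹ := by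
    intro ε
    letI : ∀ i : Fin p, SeminormedRing (Matrix (Fin (k i)) (Fin (k i)) ℂ) :=
      fun i => Matrix.linftyOpSemiNormedRing
    letI : ∀ i : Fin p, NormedRing (Matrix (Fin (k i)) (Fin (k i)) ℂ) :=
      fun i => Matrix.linftyOpNormedRing
    letI : ∀ i : Fin p, NormedAlgebra ℝ (Matrix (Fin (k i)) (Fin (k i)) ℂ) :=
      fun i => Matrix.linftyOpNormedAlgebra
    letI : ∀ i : Fin p, NormedAlgebra ℚ (Matrix (Fin (k i)) (Fin (k i)) ℂ) :=
      fun i => Matrix.linftyOpNormedAlgebra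
    have h0 : tc ε + r * ωε ε = s ε := rfl
    rw [h0, exp_map_complex, map_smul_complex, hQ]
    rw [show s ε • (P * Matrix.blockDiagonal' (fun i => jordanBlock (lam i) (k i)) * P⁻¹)
        = P * (s ε • Matrix.blockDiagonal' (fun i => jordanBlock (lam i) (k i))) * P⁻¹ by
      rw [Matrix.mul_smul, Matrix.smul_mul]]
    rw [Matrix.exp_conj _ _ ((Matrix.isUnit_iff_isUnit_det P).mpr hP)]
    rw [show s ε • Matrix.blockDiagonal' (fun i => jordanBlock (lam i) (k i))
        = Matrix.blockDiagonal' (s ε • fun i => jordanBlock (lam i) (k i)) from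
      (Matrix.blockDiagonal'_smul _ _).symm]
    rw [Matrix.exp_blockDiagonal']
    rw [show NormedSpace.exp (s ε • fun i => jordanBlock (lam i) (k i))
        = fun i => NormedSpace.exp (s ε • jordanBlock (lam i) (k i)) from
      funext fun i => Pi.coe_exp _ i]
    rw [Matrix.mul_smul, Matrix.smul_mul]
  -- target identity
  have htarget : Real.exp (-(r*w)) • Γ = P * ((C : ℝ) • N) * P⁻¹ := by
    rw [hΓ, Matrix.mul_smul, Matrix.smul_mul, smul_smul, hCdef]
  -- main entrywise convergence
  have hmain : Tendsto (fun ε => ε⁻¹ • Matrix.blockDiagonal'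
      (fun i => NormedSpace.exp (s ε • jordanBlock (lam i) (k i)))) l (nhds (C • N)) := by
    refine tendsto_pi_nhds.mpr fun x => tendsto_pi_nhds.mpr fun y => ?_
    obtain ⟨i, a⟩ := x
    obtain ⟨i', b⟩ := y
    rcases eq_or_ne i i' with rfl | hne
    · -- same block
      simp only [Matrix.smul_apply, Matrix.blockDiagonal'_apply_eq, hN, Matrix.of_apply]
      have hentry : ∀ ε : ℝ, NormedSpace.exp (s ε • jordanBlock (lam i) (k i)) a b
          = Complex.exp ((s ε : ℂ) * lam i) *
            (if (a:ℕ) ≤ (b:ℕ) then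
              (s ε : ℂ)^((b:ℕ)-(a:ℕ)) / ((((b:ℕ)-(a:ℕ)).factorial : ℝ) : ℂ) else 0) := by
        intro ε
        rw [real_smul_matrix, exp_jordan]
        norm_num
      by_cases hab : (a:ℕ) ≤ (b:ℕ)
      · by_cases hcase : (lam i).re = ϑ ∧ k i = m ∧ (a:ℕ) = 0 ∧ (b:ℕ) = m - 1
        · -- main case
          obtain ⟨hre, hkim, ha0, hbm⟩ := hcase
          have hlam : lam i = (ϑ:ℂ) := hreal i hre hkim
          have hj : (b:ℕ) - (a:ℕ) = m - 1 := by omega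
          rw [if_pos ⟨hre, hkim, ha0, hbm⟩]
          have hR : Tendsto (fun ε => ε⁻¹ * (Real.exp (ϑ * s ε) * (s ε)^(m-1)) / ((m-1).factorial : ℝ)) l
              (nhds (Real.exp (-(r*w)) * (|ϑ|⁻¹)^(m-1) / ((m-1).factorial : ℝ))) := by
            refine Tendsto.div_const ?_ _
            have hbase := hrω.mul (hsL.pow (m-1))
            refine hbase.congr' ?_
            filter_upwards [hKey, hL1] with ε h1 h2
            have hLne : Real.log (1/ε) ≠ 0 := by linarith
            rw [div_pow]
            rw [show Real.exp (ϑ*(r*ωε ε)) * ((s ε)^(m-1) / (Real.log (1/ε))^(m-1))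
                = (Real.exp (ϑ*(r*ωε ε)) * ((Real.log (1/ε))^(m-1))⁻¹) * (s ε)^(m-1) by
              field_simp]
            rw [← h1]; ring
          have hCval : Real.exp (-(r*w)) * (|ϑ|⁻¹)^(m-1) / ((m-1).factorial : ℝ) = C := by
            rw [hCdef]
            have h1 : ((1:ℝ) - (m:ℝ)) = -(((m-1 : ℕ)):ℝ) := by rw [Nat.cast_sub hm']; ring
            rw [h1, Real.rpow_neg (abs_nonneg ϑ), Real.rpow_natCast, inv_pow]
            ring
          have heq : ∀ ε : ℝ, ((ε⁻¹ * (Real.exp (ϑ * s ε) * (s ε)^(m-1)) / ((m-1).factorial : ℝ) : ℝ) : ℂ)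
              = ε⁻¹ • (NormedSpace.exp (s ε • jordanBlock (lam i) (k i)) a b) := by
            intro ε
            rw [hentry ε, if_pos hab, hj, hlam]
            rw [show ((s ε : ℂ)) * (ϑ:ℂ) = ((ϑ * s ε : ℝ) : ℂ) by push_cast; ring]
            rw [← Complex.ofReal_exp]
            rw [Complex.real_smul]
            push_cast
            ring
          have hC' := (Complex.continuous_ofReal.tendsto _).comp hR
          rw [hCval] at hC'
          have hgoal := hC'.congr heq
          rw [show (C • (1:ℂ)) = ((C:ℝ):ℂ) by rw [Complex.real_smul, mul_one]]
          exact hgoal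
        · -- zero case
          rw [if_neg hcase, smul_zero]
          have hjk : (b:ℕ) - (a:ℕ) < k i := by have := b.isLt; omega
          have hR0 : Tendsto (fun ε => ε⁻¹ * ((s ε)^((b:ℕ)-(a:ℕ)) * Real.exp ((lam i).re * s ε))) l (nhds 0) := by
            rcases lt_or_eq_of_le (hmax i) with hlt | heq'
            · have hexp0 : Tendsto (fun ε => (s ε)^((b:ℕ)-(a:ℕ)) * Real.exp (((lam i).re - ϑ) * s ε)) l (nhds 0) :=
                (tendsto_pow_mul_exp_neg _ ((lam i).re - ϑ) (by linarith)).comp hs_top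
              have hbase := (hrω.mul hc0).mul hexp0
              rw [mul_zero] at hbase
              refine hbase.congr' ?_
              filter_upwards [hKey] with ε h1
              rw [show (lam i).re * s ε = ((lam i).re - ϑ) * s ε + ϑ * s ε by ring, Real.exp_add]
              rw [← h1]; ring
            · have hkm := hm1 i heq'
              have hjm : (b:ℕ) - (a:ℕ) < m - 1 := by
                by_contra hge
                push_neg at hge
                exact hcase ⟨heq', by omega, by omega, by omega⟩
              have hLd : Tendsto (fun ε => ((Real.log (1/ε))^((m-1)-((b:ℕ)-(a:ℕ))))⁻¹) l (nhds 0) :=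
                tendsto_inv_atTop_zero.comp ((tendsto_pow_atTop (by omega)).comp hL_top)
              have hbase := (hrω.mul (hsL.pow ((b:ℕ)-(a:ℕ)))).mul hLd
              rw [mul_zero] at hbase
              refine hbase.congr' ?_
              filter_upwards [hKey, hL1] with ε h1 h2
              have hLne : Real.log (1/ε) ≠ 0 := by linarith
              rw [← heq']
              rw [show ε⁻¹ * ((s ε)^((b:ℕ)-(a:ℕ)) * Real.exp ((lam i).re * s ε))
                  = (s ε)^((b:ℕ)-(a:ℕ)) * (ε⁻¹ * Real.exp ((lam i).re * s ε)) by ring]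
              rw [heq', h1]
              rw [show (m-1) = ((b:ℕ)-(a:ℕ)) + ((m-1) - ((b:ℕ)-(a:ℕ))) by omega, pow_add, div_pow]
              field_simp
              rw [Nat.add_sub_cancel_left]
          have hR0' := hR0.div_const ((((b:ℕ)-(a:ℕ)).factorial : ℝ))
          rw [zero_div] at hR0'
          refine squeeze_zero_norm' ?_ hR0'
          filter_upwards [hIoo, hs_pos] with ε hε hsε
          rw [hentry ε, if_pos hab]
          have h1 : ‖Complex.exp ((s ε : ℂ) * lam i)‖ = Real.exp ((lam i).re * s ε) := by
            rw [Complex.norm_exp]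
            congr 1
            simp [Complex.mul_re]
            ring
          rw [norm_smul, norm_mul, norm_div, h1]
          rw [Real.norm_eq_abs, abs_of_pos (inv_pos.mpr hε.1)]
          rw [norm_pow, Complex.norm_real, Real.norm_eq_abs, abs_of_pos hsε]
          rw [Complex.norm_real, Real.norm_eq_abs,
            abs_of_pos (by positivity : (0:ℝ) < ((((b:ℕ)-(a:ℕ)).factorial : ℕ) : ℝ))]
          apply le_of_eq
          ring
      · -- a > b : entries vanish identically
        have hcond : ¬((lam i).re = ϑ ∧ k i = m ∧ (a:ℕ) = 0 ∧ (b:ℕ) = m - 1) := by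
          rintro ⟨-, hkim, ha0, hbm⟩
          have := b.isLt
          omega
        rw [if_neg hcond, smul_zero]
        have hzero : ∀ ε : ℝ, ε⁻¹ • (NormedSpace.exp (s ε • jordanBlock (lam i) (k i)) a b) = 0 := by
          intro ε
          rw [hentry ε, if_neg hab, mul_zero, smul_zero]
        exact tendsto_const_nhds.congr fun ε => (hzero ε).symm
    · -- different blocks
      have hz : ∀ ε : ℝ, (ε⁻¹ • Matrix.blockDiagonal'
          (fun i => NormedSpace.exp (s ε • jordanBlock (lam i) (k i)))) ⟨i, a⟩ ⟨i', b⟩ = 0 := by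
        intro ε
        rw [Matrix.smul_apply, Matrix.blockDiagonal'_apply_ne _ _ _ hne, smul_zero]
      have hz' : (C • N) ⟨i, a⟩ ⟨i', b⟩ = 0 := by
        rw [hN, Matrix.smul_apply, Matrix.blockDiagonal'_apply_ne _ _ _ hne, smul_zero]
      rw [hz']
      exact tendsto_const_nhds.congr fun ε => (hz ε).symm
  -- assemble
  have hcont : Continuous (fun X : Matrix ((i : Fin p) × Fin (k i)) ((i : Fin p) × Fin (k i)) ℂ => P * X * P⁻¹) :=
    (continuous_const.matrix_mul continuous_id).matrix_mul continuous_const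
  have hfinal := (hcont.tendsto (C • N)).comp hmain
  rw [htarget]
  exact hfinal.congr fun ε => (hident ε).symm
end

section
/- Let G(r) = −(1/2) ln det( I_d − ΓΣ₀Γᵀ (ΓΣ₀Γᵀ + e^{2rw} ς)^{−1} ) where Γ ∈ ℝ^{d×d} with Γ ≠ 0, Σ₀ positive definite, ς positive definite and w > 0. Then G(r) → 0 as r → +∞ and G(r) → +∞ as r → −∞. -/
open Matrix Filter Real
open scoped MatrixOrder

lemma aux_smul_posDef {d : ℕ} {M : Matrix (Fin d) (Fin d) ℝ} (h : M.PosDef)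
    {t : ℝ} (ht : 0 < t) : (t • M).PosDef := by
  refine ⟨?_, fun x hx => ?_⟩
  · have h1 : Mᵀ = M := by
      have := h.1.eq; rwa [Matrix.conjTranspose_eq_transpose_of_trivial] at this
    simp [Matrix.IsHermitian, h1]
  · exact (h.smul ht).2 hx

lemma aux_det_add_smul_one {d : ℕ} {B : Matrix (Fin d) (Fin d) ℝ} (hB : B.IsHermitian) (t : ℝ) :
    (B + t • 1).det = ∏ i, (hB.eigenvalues i + t) := by
  have hU : (hB.eigenvectorUnitary : Matrix (Fin d) (Fin d) ℝ) *
      (star hB.eigenvectorUnitary : Matrix (Fin d) (Fin d) ℝ) = 1 :=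
    Matrix.mem_unitaryGroup_iff.mp hB.eigenvectorUnitary.2
  have key : B + t • 1 = (hB.eigenvectorUnitary : Matrix (Fin d) (Fin d) ℝ) *
      (diagonal (fun i => hB.eigenvalues i + t)) *
      (star hB.eigenvectorUnitary : Matrix (Fin d) (Fin d) ℝ) := by
    conv_lhs => rw [hB.spectral_theorem, Unitary.conjStarAlgAut_apply]
    have h1 : diagonal (fun i => hB.eigenvalues i + t)
        = diagonal (RCLike.ofReal ∘ hB.eigenvalues) + t • (1 : Matrix (Fin d) (Fin d) ℝ) := by
      rw [smul_one_eq_diagonal, ← diagonal_add]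
      rfl
    rw [h1, Matrix.mul_add, Matrix.add_mul, mul_smul_comm, smul_mul_assoc, mul_one, hU]
  have hdet1 : ((hB.eigenvectorUnitary : Matrix (Fin d) (Fin d) ℝ).det) *
      ((star hB.eigenvectorUnitary : Matrix (Fin d) (Fin d) ℝ).det) = 1 := by
    rw [← det_mul, hU, det_one]
  rw [key, det_mul, det_mul, det_diagonal, mul_right_comm, hdet1, one_mul]

/-- for Γ ≠ 0, Σ₀ and ς positive definite and w > 0, the
Kullback–Leibler decorrelation profile
G(r) = −(1/2) ln det(I − ΓΣ₀Γᵀ(ΓΣ₀Γᵀ + e^{2rw}ς)⁻¹)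
satisfies G(r) → 0 as r → +∞ and G(r) → +∞ as r → −∞.
Here `S0` plays the role of Σ₀. -/
theorem stmt_19 (d : ℕ) (Γ S0 ς : Matrix (Fin d) (Fin d) ℝ) (hΓ : Γ ≠ 0)
    (hS0 : S0.PosDef) (hς : ς.PosDef) (w : ℝ) (hw : 0 < w)
    (G : ℝ → ℝ)
    (hG : ∀ r, G r = -(1 / 2) * Real.log
      ((1 - Γ * S0 * Γᵀ *
        (Γ * S0 * Γᵀ + Real.exp (2 * r * w) • ς)⁻¹).det)) :
    Tendsto G atTop (nhds 0) ∧ Tendsto G atBot atTop := by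
  classical
  set A := Γ * S0 * Γᵀ with hAdef
  have hΓt : Γᴴ = Γᵀ := Matrix.conjTranspose_eq_transpose_of_trivial Γ
  have hAH : A.PosSemidef := by
    have := hS0.posSemidef.mul_mul_conjTranspose_same Γ
    rwa [hΓt] at this
  -- A ≠ 0
  set C := CFC.sqrt S0 with hCdef
  have hC2 : C * C = S0 := CFC.sqrt_mul_sqrt_self S0 hS0.posSemidef.nonneg
  have hCH : Cᴴ = C := (CFC.sqrt_nonneg S0).posSemidef.isHermitian.eq
  have hCdet : IsUnit C.det := by
    have h : C.det * C.det = S0.det := by rw [← det_mul, hC2]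
    have hpos : (0:ℝ) < S0.det := hS0.det_pos
    refine isUnit_iff_ne_zero.mpr fun h0 => ?_
    rw [h0, mul_zero] at h
    exact hpos.ne h
  have hA0 : A ≠ 0 := by
    intro h
    have h1 : ((Γ * C)ᴴ)ᴴ * (Γ * C)ᴴ = 0 := by
      rw [conjTranspose_conjTranspose, conjTranspose_mul, hCH, hΓt]
      calc Γ * C * (C * Γᵀ) = Γ * (C * C) * Γᵀ := by noncomm_ring
        _ = 0 := by rw [hC2, ← hAdef, h]
    have h2 : Γ * C = 0 := by
      have := Matrix.conjTranspose_mul_self_eq_zero.mp h1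
      rwa [conjTranspose_eq_zero] at this
    apply hΓ
    calc Γ = Γ * C * C⁻¹ := by rw [Matrix.mul_nonsing_inv_cancel_right _ _ hCdet]
      _ = 0 := by rw [h2, Matrix.zero_mul]
  -- square root of ς and the matrix B
  set Q := CFC.sqrt ς with hQdef
  have hQ2 : Q * Q = ς := CFC.sqrt_mul_sqrt_self ς hς.posSemidef.nonneg
  have hQH : Qᴴ = Q := (CFC.sqrt_nonneg ς).posSemidef.isHermitian.eq
  have hςdet : (0:ℝ) < ς.det := hς.det_pos
  have hQdet : IsUnit Q.det := by
    have h : Q.det * Q.det = ς.det := by rw [← det_mul, hQ2]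
    refine isUnit_iff_ne_zero.mpr fun h0 => ?_
    rw [h0, mul_zero] at h
    exact hςdet.ne h
  have hQinvH : (Q⁻¹)ᴴ = Q⁻¹ := by rw [conjTranspose_nonsing_inv, hQH]
  set B := Q⁻¹ * A * Q⁻¹ with hBdef
  have hBpsd : B.PosSemidef := by
    have := hAH.mul_mul_conjTranspose_same (Q⁻¹)
    rwa [hQinvH] at this
  have hBH : B.IsHermitian := hBpsd.isHermitian
  set μ := hBH.eigenvalues with hμdef
  have hμ0 : ∀ i, 0 ≤ μ i := hBpsd.eigenvalues_nonneg
  have hQAQ : Q * B * Q = A := by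
    rw [hBdef]
    calc Q * (Q⁻¹ * A * Q⁻¹) * Q = (Q * Q⁻¹) * A * (Q⁻¹ * Q) := by noncomm_ring
      _ = A := by rw [Matrix.mul_nonsing_inv _ hQdet, Matrix.nonsing_inv_mul _ hQdet,
            Matrix.one_mul, Matrix.mul_one]
  have hBne : B ≠ 0 := fun h => hA0 (by rw [← hQAQ, h, Matrix.mul_zero, Matrix.zero_mul])
  obtain ⟨j, hj⟩ : ∃ j, μ j ≠ 0 := by
    by_contra h
    push_neg at h
    apply hBne
    have hdiag : diagonal (RCLike.ofReal ∘ μ) = (0 : Matrix (Fin d) (Fin d) ℝ) := by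
      rw [show RCLike.ofReal ∘ μ = fun _ => (0:ℝ) from funext fun i => by simp [h i],
        diagonal_zero]
    conv_lhs => rw [hBH.spectral_theorem, Unitary.conjStarAlgAut_apply]
    rw [hμdef] at hdiag
    rw [hdiag, Matrix.mul_zero, Matrix.zero_mul]
  have hμj : 0 < μ j := lt_of_le_of_ne (hμ0 j) (Ne.symm hj)
  -- key determinant formula
  have key : ∀ s : ℝ, 0 < s → (1 - A * (A + s • ς)⁻¹).det = ∏ i, s / (μ i + s) := by
    intro s hs
    have hsς : (s • ς).PosDef := aux_smul_posDef hς hs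
    have hpos : (A + s • ς).PosDef := Matrix.PosDef.posSemidef_add hAH hsς
    have hdetU : IsUnit (A + s • ς).det := isUnit_iff_ne_zero.mpr hpos.det_pos.ne'
    have h1 : 1 - A * (A + s • ς)⁻¹ = (s • ς) * (A + s • ς)⁻¹ := by
      conv_lhs => rw [← Matrix.mul_nonsing_inv _ hdetU]
      rw [← Matrix.sub_mul, add_sub_cancel_left]
    have hstruct : A + s • ς = Q * (B + s • 1) * Q := by
      rw [Matrix.mul_add, Matrix.add_mul, hQAQ, mul_smul_comm, smul_mul_assoc, mul_one, hQ2]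
    have hdsum : (A + s • ς).det = ς.det * ∏ i, (μ i + s) := by
      rw [hstruct, det_mul, det_mul, aux_det_add_smul_one hBH, mul_right_comm, ← det_mul, hQ2,
        mul_comm]
    have hprodpos : (0:ℝ) < ∏ i, (μ i + s) :=
      Finset.prod_pos fun i _ => add_pos_of_nonneg_of_pos (hμ0 i) hs
    rw [h1, det_mul, Matrix.det_nonsing_inv, Ring.inverse_eq_inv, det_smul, hdsum]
    rw [Fintype.card_fin, Finset.prod_div_distrib, Finset.prod_const, Finset.card_univ,
      Fintype.card_fin]
    field_simp
  -- rewrite G using the eigenvalue product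
  have hGr : ∀ r, G r = -(1/2) * Real.log
      (∏ i, Real.exp (2*r*w) / (μ i + Real.exp (2*r*w))) := by
    intro r
    rw [hG r, key _ (Real.exp_pos _)]
  -- limits
  set t : ℝ → ℝ := fun r => Real.exp (2*r*w) with htdef
  set F : ℝ → ℝ := fun r => ∏ i, t r / (μ i + t r) with hFdef
  have htpos : ∀ r, 0 < t r := fun r => Real.exp_pos _
  have hden : ∀ i r, 0 < μ i + t r := fun i r => add_pos_of_nonneg_of_pos (hμ0 i) (htpos r)
  have hFpos : ∀ r, 0 < F r := fun r => Finset.prod_pos fun i _ => div_pos (htpos r) (hden i r)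
  have harg : Tendsto (fun r => 2*r*w) atTop atTop := by
    have : Tendsto (fun r : ℝ => r * (2*w)) atTop atTop :=
      Tendsto.atTop_mul_const (by positivity) tendsto_id
    refine this.congr fun r => by ring
  have hargBot : Tendsto (fun r => 2*r*w) atBot atBot := by
    have : Tendsto (fun r : ℝ => r * (2*w)) atBot atBot :=
      Tendsto.atBot_mul_const (by positivity) tendsto_id
    refine this.congr fun r => by ring
  have htTop : Tendsto t atTop atTop := Real.tendsto_exp_atTop.comp harg
  have htBot : Tendsto t atBot (nhds 0) := Real.tendsto_exp_atBot.comp hargBot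
  constructor
  · -- atTop
    have hf1 : ∀ i : Fin d, Tendsto (fun r => t r / (μ i + t r)) atTop (nhds 1) := by
      intro i
      have hinv : Tendsto (fun r => (t r)⁻¹) atTop (nhds 0) :=
        tendsto_inv_atTop_zero.comp htTop
      have h2 : Tendsto (fun r => μ i * (t r)⁻¹ + 1) atTop (nhds 1) := by
        have := (hinv.const_mul (μ i)).add_const 1
        simpa using this
      have h3 : Tendsto (fun r => (μ i * (t r)⁻¹ + 1)⁻¹) atTop (nhds 1) := by
        simpa using h2.inv₀ one_ne_zero
      refine h3.congr fun r => ?_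
      have he : μ i * (t r)⁻¹ + 1 = (μ i + t r) / t r := by
        field_simp
        rw [div_add_one (htpos r).ne']
      rw [he, inv_div]
    have hF1 : Tendsto F atTop (nhds 1) := by
      rw [show (1:ℝ) = ∏ _i : Fin d, (1:ℝ) by simp]
      exact tendsto_finset_prod (Finset.univ : Finset (Fin d)) (fun i _ => hf1 i)
    have hlog : Tendsto (fun r => Real.log (F r)) atTop (nhds 0) := by
      have := ((Real.continuousAt_log one_ne_zero).tendsto).comp hF1
      simpa [Function.comp_def] using this
    have hfin : Tendsto G atTop (nhds (-(1/2) * 0)) := by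
      refine Tendsto.congr (fun r => (hGr r).symm) (hlog.const_mul _)
    simpa using hfin
  · -- atBot
    have hupper : ∀ r, F r ≤ t r / μ j := by
      intro r
      have hle1 : ∀ i, t r / (μ i + t r) ≤ 1 := fun i =>
        div_le_one_of_le₀ (le_add_of_nonneg_left (hμ0 i)) (hden i r).le
      have hF_le : F r ≤ t r / (μ j + t r) := by
        rw [hFdef]
        calc (∏ i, t r / (μ i + t r))
            = (t r / (μ j + t r)) * ∏ i ∈ Finset.univ.erase j, t r / (μ i + t r) := by
              rw [← Finset.mul_prod_erase _ _ (Finset.mem_univ j)]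
          _ ≤ (t r / (μ j + t r)) * 1 := by
              refine mul_le_mul_of_nonneg_left ?_ (div_pos (htpos r) (hden j r)).le
              exact Finset.prod_le_one (fun i _ => (div_pos (htpos r) (hden i r)).le)
                (fun i _ => hle1 i)
          _ = t r / (μ j + t r) := mul_one _
      refine hF_le.trans ?_
      exact div_le_div_of_nonneg_left (htpos r).le hμj (le_add_of_nonneg_right (htpos r).le)
    have hub : Tendsto (fun r => t r / μ j) atBot (nhds 0) := by
      simpa using htBot.div_const (μ j)
    have hF0 : Tendsto F atBot (nhds 0) :=
      tendsto_of_tendsto_of_tendsto_of_le_of_le tendsto_const_nhds hub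
        (fun r => (hFpos r).le) hupper
    have hFin : Tendsto F atBot (nhdsWithin 0 (Set.Ioi 0)) :=
      tendsto_nhdsWithin_of_tendsto_nhds_of_eventually_within _ hF0
        (Eventually.of_forall fun r => hFpos r)
    have hlog : Tendsto (fun r => Real.log (F r)) atBot atBot :=
      Real.tendsto_log_nhdsGT_zero.comp hFin
    have hneg : Tendsto (fun r => -Real.log (F r)) atBot atTop :=
      tendsto_neg_atBot_atTop.comp hlog
    have hfin : Tendsto (fun r => (1/2 : ℝ) * (-Real.log (F r))) atBot atTop :=
      hneg.const_mul_atTop (by norm_num)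
    refine hfin.congr fun r => ?_
    rw [hGr r]
    ring
end
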